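/- Bäcklund transformation of the Z_n-Sinh-Gordon equation (matrix form). Let n ≥ 1, let Γ be the n×n lower shift matrix over ℂ, let a be a nonzero real number, and let u_k, u'_k : ℝ×ℝ → ℝ (0 ≤ k ≤ n−1) be smooth functions. Define U(x,t) = Σ_{k=0}^{n−1} u_k(x,t) Γ^k and U'(x,t) = Σ_{k=0}^{n−1} u'_k(x,t) Γ^k. Suppose that ∂_x((U'+U)/2) = a · sinh((U'−U)/2) and ∂_t((U'−U)/2) = (1/a) · sinh((U'+U)/2) hold everywhere, and that U solves the Z_n-Sinh-Gordon equation ∂_t∂_x U = sinh U. Then U' also solves ∂_t∂_x U' = sinh U'. -/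

import Mathlib

/-!
Put `W = (U' + U)/2` and `V = (U' - U)/2`, so that `U' = W + V` and `U = W - V`. The first
Bäcklund equation gives `∂ₓU' = 2a sinh V - ∂ₓU`. Since `V` takes values in the commutative
algebra `ℂ[Γ]`, the chain rule `∂ₜ sinh V = cosh V · ∂ₜV` holds, and the second Bäcklund equation
turns `∂ₜ∂ₓU'` into `2 cosh V sinh W - sinh U = sinh (W + V) + sinh (W - V) - sinh U = sinh U'`.
-/

/-- Matrix hyperbolic sine: `sinh M = (exp(M) − exp(−M))/2`. -/
noncomputable def matSinh {n : ℕ} (M : Matrix (Fin n) (Fin n) ℂ) : Matrix (Fin n) (Fin n) ℂ :=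
  (2 : ℂ)⁻¹ • (NormedSpace.exp M - NormedSpace.exp (-M))

/-- The `n×n` lower shift matrix `Γ`, with `Γ i j = 1` iff `i = j + 1`. -/
def lowerShift (n : ℕ) : Matrix (Fin n) (Fin n) ℂ :=
  Matrix.of fun i j => if (i : ℕ) = (j : ℕ) + 1 then 1 else 0

open NormedSpace

noncomputable def matCosh {n : ℕ} (M : Matrix (Fin n) (Fin n) ℂ) : Matrix (Fin n) (Fin n) ℂ :=
  (2 : ℂ)⁻¹ • (exp M + exp (-M))

theorem Algebra.commute_of_mem_adjoin_singleton {R A : Type*} [CommSemiring R] [Semiring A]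
    [Algebra R A] {x a b : A} (ha : a ∈ adjoin R {x}) (hb : b ∈ adjoin R {x}) : Commute a b :=
  commute_of_mem_adjoin_singleton_of_commute hb (commute_of_mem_adjoin_self ha).symm

theorem Algebra.sum_smul_pow_mem_adjoin_singleton {R A : Type*} [CommSemiring R] [Semiring A]
    [Algebra R A] (x : A) (c : ℕ → R) (s : Finset ℕ) :
    ∑ k ∈ s, c k • x ^ k ∈ adjoin R {x} :=
  Subalgebra.sum_mem _ fun k _ =>
    Subalgebra.smul_mem _ (Subalgebra.pow_mem _ (self_mem_adjoin_singleton R x) k) _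

theorem matCosh_mul_matSinh {n : ℕ} {X Y : Matrix (Fin n) (Fin n) ℂ} (h : Commute X Y) :
    matCosh Y * matSinh X = (2 : ℂ)⁻¹ • (matSinh (X + Y) + matSinh (X - Y)) := by
  have e₁ : exp Y * exp X = exp (X + Y) := by
    rw [← Matrix.exp_add_of_commute _ _ h.symm, add_comm]
  have e₂ : exp Y * exp (-X) = exp (-(X - Y)) := by
    rw [← Matrix.exp_add_of_commute _ _ h.symm.neg_right, neg_sub, sub_eq_add_neg]
  have e₃ : exp (-Y) * exp X = exp (X - Y) := by
    rw [← Matrix.exp_add_of_commute _ _ h.symm.neg_left, neg_add_eq_sub]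
  have e₄ : exp (-Y) * exp (-X) = exp (-(X + Y)) := by
    rw [← Matrix.exp_add_of_commute _ _ h.symm.neg_left.neg_right, neg_add, add_comm]
  rw [matCosh, matSinh, matSinh, matSinh, smul_mul_assoc, mul_smul_comm, add_mul, mul_sub,
    mul_sub, e₁, e₂, e₃, e₄]
  module

theorem hasDerivAt_exp_of_commute {𝔸 : Type*} [NormedRing 𝔸] [NormedAlgebra ℝ 𝔸] [CompleteSpace 𝔸]
    {f : ℝ → 𝔸} {f' : 𝔸} {t : ℝ} (hf : HasDerivAt f f' t) (hc : ∀ s, Commute (f t) (f s)) :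
    HasDerivAt (fun s => exp (f s)) (exp (f t) * f') t := by
  have hsplit : (fun s => exp (f s)) = fun s => exp (f t) * exp (f s - f t) := by
    funext s
    rw [← exp_add_of_commute_of_mem_ball (𝕂 := ℝ) ((hc s).sub_right (Commute.refl _)),
      add_sub_cancel] <;> simp [expSeries_radius_eq_top]
  have hexp : HasFDerivAt exp (1 : 𝔸 →L[ℝ] 𝔸) (f t - f t) := by
    rw [sub_self]; exact hasFDerivAt_exp_zero
  rw [hsplit]
  exact (hexp.comp_hasDerivAt t (hf.sub_const (f t))).const_mul (exp (f t))

section MatrixCalculus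

-- Any Banach-algebra norm would do: `hasDerivAt_matSinh_apply_of_commute` is stated entrywise.
attribute [local instance] Matrix.linftyOpNormedAddCommGroup Matrix.linftyOpNormedSpace
  Matrix.linftyOpNormedRing Matrix.linftyOpNormedAlgebra

variable {m m' : Type*} [Fintype m] [Fintype m'] [DecidableEq m] [DecidableEq m']

theorem Matrix.hasDerivAt_iff_apply {f : ℝ → Matrix m m' ℂ} {f' : Matrix m m' ℂ} {t : ℝ} :
    HasDerivAt f f' t ↔ ∀ i j, HasDerivAt (fun s => f s i j) (f' i j) t := by
  refine ⟨fun h i j => ?_, fun h => ?_⟩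
  · let L : Matrix m m' ℂ →L[ℝ] ℂ :=
      LinearMap.toContinuousLinearMap (Matrix.entryLinearMap ℝ ℂ i j)
    exact L.hasFDerivAt.comp_hasDerivAt t h
  · have hsum := HasDerivAt.fun_sum fun i (_ : i ∈ Finset.univ) =>
      HasDerivAt.fun_sum fun j (_ : j ∈ Finset.univ) =>
        (h i j).smul_const (Matrix.single i j (1 : ℂ))
    have hexpand (M : Matrix m m' ℂ) : ∑ i, ∑ j, M i j • Matrix.single i j (1 : ℂ) = M := by
      simp only [Matrix.smul_single, smul_eq_mul, mul_one]
      exact (Matrix.matrix_eq_sum_single M).symm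
    simp only [hexpand] at hsum
    exact hsum

theorem hasDerivAt_matSinh_apply_of_commute {n : ℕ} {f : ℝ → Matrix (Fin n) (Fin n) ℂ}
    {f' : Matrix (Fin n) (Fin n) ℂ} {t : ℝ}
    (hf : ∀ i j, HasDerivAt (fun s => f s i j) (f' i j) t) (hc : ∀ s, Commute (f t) (f s))
    (i j : Fin n) :
    HasDerivAt (fun s => matSinh (f s) i j) ((matCosh (f t) * f') i j) t := by
  have hF := Matrix.hasDerivAt_iff_apply.mpr hf
  have h₁ := hasDerivAt_exp_of_commute hF hc
  have h₂ := hasDerivAt_exp_of_commute hF.neg fun s => (hc s).neg_left.neg_right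
  refine Matrix.hasDerivAt_iff_apply.mp ?_ i j
  have h := (h₁.sub h₂).const_smul (2 : ℂ)⁻¹
  rw [Pi.neg_apply, mul_neg, sub_neg_eq_add, ← add_mul, ← smul_mul_assoc] at h
  exact h

end MatrixCalculus

section Partials

variable {E : Type*} [NormedAddCommGroup E] [NormedSpace ℝ E] {F : ℝ × ℝ → E}

theorem differentiableAt_partial_fst (hF : Differentiable ℝ F) (x t : ℝ) :
    DifferentiableAt ℝ (fun x' => F (x', t)) x :=
  (hF _).comp x (differentiableAt_id.prodMk (differentiableAt_const t))

theorem differentiableAt_partial_snd (hF : Differentiable ℝ F) (x t : ℝ) :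
    DifferentiableAt ℝ (fun t' => F (x, t')) t :=
  (hF _).comp t ((differentiableAt_const x).prodMk differentiableAt_id)

theorem differentiableAt_deriv_partial_fst (hF : ContDiff ℝ 2 F) (x t : ℝ) :
    DifferentiableAt ℝ (fun t' => deriv (fun x' => F (x', t')) x) t := by
  have hpartial (t' : ℝ) : deriv (fun x' => F (x', t')) x = fderiv ℝ F (x, t') (1, 0) :=
    ((hF.differentiable two_ne_zero _).hasFDerivAt.comp_hasDerivAt x
      ((hasDerivAt_id x).prodMk (hasDerivAt_const x t'))).deriv
  simp only [hpartial]
  have hF' : ContDiff ℝ 1 fun p => fderiv ℝ F p (1, 0) :=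
    (hF.fderiv_right le_rfl).clm_apply contDiff_const
  exact (hF'.differentiable one_ne_zero _).comp t
    ((differentiableAt_const x).prodMk differentiableAt_id)

end Partials

theorem contDiff_sum_smul_apply {E m m' : Type*} [NormedAddCommGroup E] [NormedSpace ℝ E]
    {N : WithTop ℕ∞} {g : ℕ → E → ℝ} (hg : ∀ k, ContDiff ℝ N (g k))
    (A : ℕ → Matrix m m' ℂ) (s : Finset ℕ) (i : m) (j : m') :
    ContDiff ℝ N fun p => (∑ k ∈ s, (g k p : ℂ) • A k) i j := by
  simp only [Matrix.sum_apply, Matrix.smul_apply, smul_eq_mul]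
  exact ContDiff.sum fun k _ => (Complex.ofRealCLM.contDiff.comp (hg k)).mul contDiff_const

section Backlund

variable {n : ℕ} {a : ℝ} {U U' : ℝ → ℝ → Matrix (Fin n) (Fin n) ℂ}

theorem deriv_fst_eq_of_backlund {x t : ℝ} {i j : Fin n}
    (hU : DifferentiableAt ℝ (fun x' => U x' t i j) x)
    (hU' : DifferentiableAt ℝ (fun x' => U' x' t i j) x)
    (hBx : deriv (fun x' => ((2 : ℂ)⁻¹ • (U' x' t + U x' t)) i j) x
      = ((a : ℂ) • matSinh ((2 : ℂ)⁻¹ • (U' x t - U x t))) i j) :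
    deriv (fun x' => U' x' t i j) x
      = 2 * a * matSinh ((2 : ℂ)⁻¹ • (U' x t - U x t)) i j - deriv (fun x' => U x' t i j) x := by
  simp only [Matrix.smul_apply, Matrix.add_apply, smul_eq_mul] at hBx
  rw [deriv_const_mul _ (hU'.fun_add hU), deriv_fun_add hU' hU] at hBx
  linear_combination 2 * hBx

theorem sinhGordon_backlund_of_mem_adjoin (M : Matrix (Fin n) (Fin n) ℂ) (ha : a ≠ 0)
    (hUM : ∀ x t, U x t ∈ Algebra.adjoin ℂ {M}) (hU'M : ∀ x t, U' x t ∈ Algebra.adjoin ℂ {M})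
    (hU : ∀ i j, ContDiff ℝ 2 fun p : ℝ × ℝ => U p.1 p.2 i j)
    (hU' : ∀ i j, Differentiable ℝ fun p : ℝ × ℝ => U' p.1 p.2 i j)
    (hBx : ∀ (x t : ℝ) (i j : Fin n),
      deriv (fun x' => ((2 : ℂ)⁻¹ • (U' x' t + U x' t)) i j) x
        = ((a : ℂ) • matSinh ((2 : ℂ)⁻¹ • (U' x t - U x t))) i j)
    (hBt : ∀ (x t : ℝ) (i j : Fin n),
      deriv (fun t' => ((2 : ℂ)⁻¹ • (U' x t' - U x t')) i j) t
        = ((a : ℂ)⁻¹ • matSinh ((2 : ℂ)⁻¹ • (U' x t + U x t))) i j)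
    (hSG : ∀ (x t : ℝ) (i j : Fin n),
      deriv (fun t' => deriv (fun x' => U x' t' i j) x) t = matSinh (U x t) i j)
    (x t : ℝ) (i j : Fin n) :
    deriv (fun t' => deriv (fun x' => U' x' t' i j) x) t = matSinh (U' x t) i j := by
  have hUd (i j : Fin n) := (hU i j).differentiable two_ne_zero
  have hVmem (t' : ℝ) : (2 : ℂ)⁻¹ • (U' x t' - U x t') ∈ Algebra.adjoin ℂ {M} :=
    Subalgebra.smul_mem _ (Subalgebra.sub_mem _ (hU'M x t') (hUM x t')) _
  have hWmem : (2 : ℂ)⁻¹ • (U' x t + U x t) ∈ Algebra.adjoin ℂ {M} :=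
    Subalgebra.smul_mem _ (Subalgebra.add_mem _ (hU'M x t) (hUM x t)) _
  have hVt (i j : Fin n) : HasDerivAt (fun t' => ((2 : ℂ)⁻¹ • (U' x t' - U x t')) i j)
      (((a : ℂ)⁻¹ • matSinh ((2 : ℂ)⁻¹ • (U' x t + U x t))) i j) t :=
    (((differentiableAt_partial_snd (hU' i j) x t).sub
      (differentiableAt_partial_snd (hUd i j) x t)).const_mul (2 : ℂ)⁻¹).hasDerivAt.congr_deriv
      (hBt x t i j)
  have hsinhV := hasDerivAt_matSinh_apply_of_commute hVt
    (fun s => Algebra.commute_of_mem_adjoin_singleton (hVmem t) (hVmem s)) i j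
  have hUx : HasDerivAt (fun t' => deriv (fun x' => U x' t' i j) x) (matSinh (U x t) i j) t :=
    hSG x t i j ▸ (differentiableAt_deriv_partial_fst (hU i j) x t).hasDerivAt
  rw [funext fun t' => deriv_fst_eq_of_backlund (differentiableAt_partial_fst (hUd i j) x t')
      (differentiableAt_partial_fst (hU' i j) x t') (hBx x t' i j),
    ((hsinhV.const_mul (2 * a : ℂ)).fun_sub hUx).deriv, Matrix.mul_smul,
    matCosh_mul_matSinh (Algebra.commute_of_mem_adjoin_singleton hWmem (hVmem t)),
    show (2 : ℂ)⁻¹ • (U' x t + U x t) + (2 : ℂ)⁻¹ • (U' x t - U x t) = U' x t by module,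
    show (2 : ℂ)⁻¹ • (U' x t + U x t) - (2 : ℂ)⁻¹ • (U' x t - U x t) = U x t by module]
  have ha' : (a : ℂ) ≠ 0 := by exact_mod_cast ha
  simp only [Matrix.smul_apply, Matrix.add_apply, smul_eq_mul]
  field_simp
  ring

end Backlund

theorem Zn_sinhGordon_backlund_general (n : ℕ) (a : ℝ) (ha : a ≠ 0)
    (u u' : ℕ → ℝ → ℝ → ℝ)
    (hu : ∀ k, ContDiff ℝ (⊤ : ℕ∞) fun p : ℝ × ℝ => u k p.1 p.2)
    (hu' : ∀ k, ContDiff ℝ (⊤ : ℕ∞) fun p : ℝ × ℝ => u' k p.1 p.2)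
    (U U' : ℝ → ℝ → Matrix (Fin n) (Fin n) ℂ)
    (hU : ∀ x t, U x t = ∑ k ∈ Finset.range n, (u k x t : ℂ) • lowerShift n ^ k)
    (hU' : ∀ x t, U' x t = ∑ k ∈ Finset.range n, (u' k x t : ℂ) • lowerShift n ^ k)
    (hBx : ∀ (x t : ℝ) (i j : Fin n),
      deriv (fun x' => ((2 : ℂ)⁻¹ • (U' x' t + U x' t)) i j) x
        = ((a : ℂ) • matSinh ((2 : ℂ)⁻¹ • (U' x t - U x t))) i j)
    (hBt : ∀ (x t : ℝ) (i j : Fin n),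
      deriv (fun t' => ((2 : ℂ)⁻¹ • (U' x t' - U x t')) i j) t
        = ((a : ℂ)⁻¹ • matSinh ((2 : ℂ)⁻¹ • (U' x t + U x t))) i j)
    (hSG : ∀ (x t : ℝ) (i j : Fin n),
      deriv (fun t' => deriv (fun x' => U x' t' i j) x) t = matSinh (U x t) i j) :
    ∀ (x t : ℝ) (i j : Fin n),
      deriv (fun t' => deriv (fun x' => U' x' t' i j) x) t = matSinh (U' x t) i j := by
  have hUs (i j : Fin n) : ContDiff ℝ (⊤ : ℕ∞) fun p : ℝ × ℝ => U p.1 p.2 i j := by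
    simpa only [hU] using contDiff_sum_smul_apply hu (lowerShift n ^ ·) (Finset.range n) i j
  have hU's (i j : Fin n) : ContDiff ℝ (⊤ : ℕ∞) fun p : ℝ × ℝ => U' p.1 p.2 i j := by
    simpa only [hU'] using contDiff_sum_smul_apply hu' (lowerShift n ^ ·) (Finset.range n) i j
  refine sinhGordon_backlund_of_mem_adjoin (lowerShift n) ha
    (fun x t => hU x t ▸ Algebra.sum_smul_pow_mem_adjoin_singleton _ _ _)
    (fun x t => hU' x t ▸ Algebra.sum_smul_pow_mem_adjoin_singleton _ _ _)
    (fun i j => (hUs i j).of_le (WithTop.coe_le_coe.mpr le_top))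
    (fun i j => (hU's i j).differentiable (by simp)) hBx hBt hSG

/-- Bäcklund transformation of the `Z_n`-Sinh-Gordon equation (matrix form).
If `∂_x((U'+U)/2) = a·sinh((U'−U)/2)`, `∂_t((U'−U)/2) = (1/a)·sinh((U'+U)/2)` (entrywise),
and `U` solves `∂_t∂_x U = sinh U`, then `U'` solves `∂_t∂_x U' = sinh U'`. -/
theorem Zn_sinhGordon_backlund (n : ℕ) (hn : 1 ≤ n) (a : ℝ) (ha : a ≠ 0)
    (u u' : ℕ → ℝ → ℝ → ℝ)
    (hu : ∀ k, ContDiff ℝ (⊤ : ℕ∞) fun p : ℝ × ℝ => u k p.1 p.2)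
    (hu' : ∀ k, ContDiff ℝ (⊤ : ℕ∞) fun p : ℝ × ℝ => u' k p.1 p.2)
    (U U' : ℝ → ℝ → Matrix (Fin n) (Fin n) ℂ)
    (hU : ∀ x t, U x t = ∑ k ∈ Finset.range n, (u k x t : ℂ) • lowerShift n ^ k)
    (hU' : ∀ x t, U' x t = ∑ k ∈ Finset.range n, (u' k x t : ℂ) • lowerShift n ^ k)
    (hBx : ∀ (x t : ℝ) (i j : Fin n),
      deriv (fun x' => ((2 : ℂ)⁻¹ • (U' x' t + U x' t)) i j) x
        = ((a : ℂ) • matSinh ((2 : ℂ)⁻¹ • (U' x t - U x t))) i j)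
    (hBt : ∀ (x t : ℝ) (i j : Fin n),
      deriv (fun t' => ((2 : ℂ)⁻¹ • (U' x t' - U x t')) i j) t
        = ((a : ℂ)⁻¹ • matSinh ((2 : ℂ)⁻¹ • (U' x t + U x t))) i j)
    (hSG : ∀ (x t : ℝ) (i j : Fin n),
      deriv (fun t' => deriv (fun x' => U x' t' i j) x) t = matSinh (U x t) i j) :
    ∀ (x t : ℝ) (i j : Fin n),
      deriv (fun t' => deriv (fun x' => U' x' t' i j) x) t = matSinh (U' x t) i j :=
  Zn_sinhGordon_backlund_general n a ha u u' hu hu' U U' hU hU' hBx hBt hSG
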